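/- For every real number ρ > 1, one has 0 < κ^c_ρ < 1; more precisely 2√ρ/(1+ρ) ≤ κ^c_ρ ≤ κ^c_ρ(1) < 1. -/

import Mathlib

open MeasureTheory Filter

/-- `rIdx ρ k i` is r_i for i ∈ {2, …, k+1}: r_i = 2 for 2 ≤ i ≤ k and r_{k+1} = 1+ρ. -/
noncomputable def rIdx (ρ : ℝ) (k i : ℕ) : ℝ := if i = k + 1 then 1 + ρ else 2

/-- `dSeq ρ k a j` is d_{j+1}: d_1 = 1+ρ and
d_{j+2} = √(d_{j+1}² + 2 r_{j+2} a_{j+2} d_{j+1} + r_{j+2}²), where `a ⟨j, _⟩` encodes a_{j+2}. -/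
noncomputable def dSeq (ρ : ℝ) (k : ℕ) (a : Fin k → ℝ) : ℕ → ℝ
  | 0 => 1 + ρ
  | j + 1 =>
      Real.sqrt (dSeq ρ k a j ^ 2
        + 2 * rIdx ρ k (j + 2) * (if h : j < k then a ⟨j, h⟩ else 0) * dSeq ρ k a j
        + rIdx ρ k (j + 2) ^ 2)

/-- D(a_2,…,a_{k+1}) = d_{k+1}. -/
noncomputable def Dfun (ρ : ℝ) (k : ℕ) (a : Fin k → ℝ) : ℝ := dSeq ρ k a k

/-- κ^c_ρ(k): the infimum over (a_2,…,a_{k+1}) ∈ [0,1)^k of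
max( (4ρ/((1+ρ)² ∏ √(1−a_i²)))^{1/(k+1)} , 2ρ/D(a_2,…,a_{k+1}) ). -/
noncomputable def kappaCk (ρ : ℝ) (k : ℕ) : ℝ :=
  sInf ((fun a : Fin k → ℝ =>
      max ((4 * ρ / ((1 + ρ) ^ 2 * ∏ i, Real.sqrt (1 - a i ^ 2))) ^ ((1 : ℝ) / ((k : ℝ) + 1)))
        (2 * ρ / Dfun ρ k a)) '' {a | ∀ i, 0 ≤ a i ∧ a i < 1})

/-- κ^c_ρ = inf_{k ≥ 1} κ^c_ρ(k). -/
noncomputable def kappaC (ρ : ℝ) : ℝ := sInf {x | ∃ k : ℕ, 1 ≤ k ∧ x = kappaCk ρ k}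

/-!
Since `P = ∏ √(1 - a_i²) ∈ (0, 1]` and `b = 4ρ/(1+ρ)² ≤ 1` (AM–GM), the first term of the maximum is
at least `b^{1/(k+1)} ≥ b^{1/2} = 2√ρ/(1+ρ)`, which bounds every `κ^c_ρ(k)` and hence `κ^c_ρ` from below.
For the upper bound, `k = 1` with `a_2 = ((ρ-1)/(ρ+1))²` gives `D = 2√(1+ρ²) > 2ρ` and
`(1+ρ)⁴(1 - a_2²) = 8ρ(1+ρ²) > 16ρ²`, so both terms of the maximum are below `1`.
-/

open Real

noncomputable def kappaObjective (ρ : ℝ) (k : ℕ) (a : Fin k → ℝ) : ℝ :=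
  max ((4 * ρ / ((1 + ρ) ^ 2 * ∏ i, √(1 - a i ^ 2))) ^ ((1 : ℝ) / ((k : ℝ) + 1)))
    (2 * ρ / Dfun ρ k a)

def halfOpenUnitCube (k : ℕ) : Set (Fin k → ℝ) := {a | ∀ i, 0 ≤ a i ∧ a i < 1}

lemma kappaCk_eq_sInf_image (ρ : ℝ) (k : ℕ) :
    kappaCk ρ k = sInf (kappaObjective ρ k '' halfOpenUnitCube k) := rfl

lemma four_mul_div_one_add_sq_le_one (ρ : ℝ) : 4 * ρ / (1 + ρ) ^ 2 ≤ 1 :=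
  div_le_one_of_le₀ (by nlinarith [sq_nonneg (ρ - 1)]) (sq_nonneg _)

lemma sqrt_four_mul_div_one_add_sq {ρ : ℝ} (hρ : 0 ≤ ρ) :
    √(4 * ρ / (1 + ρ) ^ 2) = 2 * √ρ / (1 + ρ) := by
  rw [sqrt_div' _ (sq_nonneg _), sqrt_sq (by linarith), sqrt_mul' _ hρ,
    show (4 : ℝ) = 2 ^ 2 by norm_num, sqrt_sq zero_le_two]

lemma prod_sqrt_one_sub_sq_mem_Ioc {k : ℕ} {a : Fin k → ℝ} (ha : a ∈ halfOpenUnitCube k) :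
    ∏ i, √(1 - a i ^ 2) ∈ Set.Ioc 0 1 :=
  ⟨Finset.prod_pos fun i _ => sqrt_pos.2 (by nlinarith [ha i]),
    Finset.prod_le_one (fun _ _ => sqrt_nonneg _)
      fun i _ => sqrt_le_one.2 (by nlinarith [ha i])⟩

lemma two_mul_sqrt_div_le_kappaObjective {ρ : ℝ} (hρ : 0 ≤ ρ) {k : ℕ} (hk : 1 ≤ k)
    {a : Fin k → ℝ} (ha : a ∈ halfOpenUnitCube k) :
    2 * √ρ / (1 + ρ) ≤ kappaObjective ρ k a := by
  set b := 4 * ρ / (1 + ρ) ^ 2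
  obtain ⟨hP₀, hP₁⟩ := prod_sqrt_one_sub_sq_mem_Ioc ha
  have hb₀ : 0 ≤ b := by positivity
  have hexp : (1 : ℝ) / ((k : ℝ) + 1) ≤ 1 / 2 := by
    gcongr
    have : (1 : ℝ) ≤ k := by exact_mod_cast hk
    linarith
  have hbase : b ≤ 4 * ρ / ((1 + ρ) ^ 2 * ∏ i, √(1 - a i ^ 2)) :=
    div_le_div_of_nonneg_left (by positivity) (by positivity)
      (mul_le_of_le_one_right (sq_nonneg _) hP₁)
  calc 2 * √ρ / (1 + ρ) = b ^ ((1 : ℝ) / 2) := by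
        rw [← sqrt_eq_rpow, sqrt_four_mul_div_one_add_sq hρ]
    _ ≤ b ^ ((1 : ℝ) / ((k : ℝ) + 1)) :=
        rpow_le_rpow_of_exponent_ge' hb₀ (four_mul_div_one_add_sq_le_one ρ) (by positivity) hexp
    _ ≤ _ := rpow_le_rpow hb₀ hbase (by positivity)
    _ ≤ kappaObjective ρ k a := le_max_left _ _

lemma bddBelow_kappaObjective_image {ρ : ℝ} (hρ : 0 ≤ ρ) {k : ℕ} (hk : 1 ≤ k) :
    BddBelow (kappaObjective ρ k '' halfOpenUnitCube k) :=
  ⟨_, Set.forall_mem_image.2 fun _ ha => two_mul_sqrt_div_le_kappaObjective hρ hk ha⟩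

lemma two_mul_sqrt_div_le_kappaCk {ρ : ℝ} (hρ : 0 ≤ ρ) {k : ℕ} (hk : 1 ≤ k) :
    2 * √ρ / (1 + ρ) ≤ kappaCk ρ k := by
  rw [kappaCk_eq_sInf_image]
  exact le_csInf ⟨_, fun _ => 0, fun _ => ⟨le_rfl, zero_lt_one⟩, rfl⟩
    (Set.forall_mem_image.2 fun _ ha => two_mul_sqrt_div_le_kappaObjective hρ hk ha)

lemma Dfun_one (ρ : ℝ) (a : Fin 1 → ℝ) :
    Dfun ρ 1 a = √((1 + ρ) ^ 2 + 2 * (1 + ρ) * a 0 * (1 + ρ) + (1 + ρ) ^ 2) := by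
  simp [Dfun, dSeq, rIdx]

lemma kappaCk_one_lt_one {ρ : ℝ} (hρ : 1 < ρ) : kappaCk ρ 1 < 1 := by
  have hρ₀ : 0 < ρ := by linarith
  set c := ((ρ - 1) / (1 + ρ)) ^ 2
  have hc₀ : 0 ≤ c := sq_nonneg _
  have hc₁ : c < 1 :=
    pow_lt_one₀ (div_nonneg (by linarith) (by linarith))
      ((div_lt_one (by linarith)).2 (by linarith)) two_ne_zero
  have hD : Dfun ρ 1 (fun _ => c) = 2 * √(1 + ρ ^ 2) := by
    rw [Dfun_one, show (2 : ℝ) = √(2 ^ 2) by simp, ← sqrt_mul (sq_nonneg _)]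
    congr 1
    simp only [c]
    field_simp
    ring
  have hfirst : 4 * ρ / ((1 + ρ) ^ 2 * √(1 - c ^ 2)) < 1 := by
    have hc : (1 + ρ) ^ 4 * (1 - c ^ 2) = 8 * ρ * (1 + ρ ^ 2) := by
      simp only [c]
      field_simp
      ring
    have h1c : 0 < 1 - c ^ 2 := by nlinarith
    have hsq : (4 * ρ) ^ 2 < ((1 + ρ) ^ 2 * √(1 - c ^ 2)) ^ 2 := by
      rw [mul_pow ((1 + ρ) ^ 2), sq_sqrt h1c.le, ← pow_mul, hc]
      nlinarith [mul_pos hρ₀ (pow_pos (sub_pos.2 hρ) 2)]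
    have hden : 0 < (1 + ρ) ^ 2 * √(1 - c ^ 2) := by
      have := sqrt_pos.2 h1c
      positivity
    exact (div_lt_one hden).2 (lt_of_pow_lt_pow_left₀ 2 hden.le hsq)
  have hsecond : 2 * ρ < Dfun ρ 1 (fun _ => c) := by
    rw [hD]
    gcongr
    exact (lt_sqrt hρ₀.le).2 (by linarith)
  rw [kappaCk_eq_sInf_image]
  calc sInf (kappaObjective ρ 1 '' halfOpenUnitCube 1) ≤ kappaObjective ρ 1 (fun _ => c) :=
        csInf_le (bddBelow_kappaObjective_image hρ₀.le le_rfl)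
          ⟨_, fun _ => ⟨hc₀, hc₁⟩, rfl⟩
    _ < 1 := by
      refine max_lt ?_ ((div_lt_one (by linarith)).2 hsecond)
      simpa using rpow_lt_one (by positivity) hfirst (by norm_num)

/-- For every ρ > 1 one has 0 < κ^c_ρ < 1; more precisely
2√ρ/(1+ρ) ≤ κ^c_ρ ≤ κ^c_ρ(1) < 1. -/
theorem kappaC_pos_lt_one (ρ : ℝ) (hρ : 1 < ρ) :
    0 < kappaC ρ ∧ kappaC ρ < 1 ∧
    2 * Real.sqrt ρ / (1 + ρ) ≤ kappaC ρ ∧ kappaC ρ ≤ kappaCk ρ 1 ∧ kappaCk ρ 1 < 1 := by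
  have hρ₀ : 0 ≤ ρ := by linarith
  have hlower : ∀ x ∈ {x | ∃ k : ℕ, 1 ≤ k ∧ x = kappaCk ρ k}, 2 * √ρ / (1 + ρ) ≤ x := by
    rintro _ ⟨k, hk, rfl⟩
    exact two_mul_sqrt_div_le_kappaCk hρ₀ hk
  have hge : 2 * √ρ / (1 + ρ) ≤ kappaC ρ := le_csInf ⟨_, 1, le_rfl, rfl⟩ hlower
  have hle : kappaC ρ ≤ kappaCk ρ 1 := csInf_le ⟨_, hlower⟩ ⟨1, le_rfl, rfl⟩
  have hlt : kappaCk ρ 1 < 1 := kappaCk_one_lt_one hρ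
  have hpos : 0 < 2 * √ρ / (1 + ρ) := by positivity
  exact ⟨hpos.trans_le hge, hle.trans_lt hlt, hge, hle, hlt⟩
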